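/- arXiv:0912.0051 — 3 statements merged into one kernel-verified Lean document; each statement's English description precedes it below -/
import Mathlib

section
/- Let X be a set (type) of cardinality λ ≥ 1 and n a positive integer. Let τ_c be the topology on exp_n(λ) = {A ⊆ X : |A| ≤ n} generated by the base consisting of all sets of the form ↑e \ (↑e₁ ∪ ⋯ ∪ ↑e_i), where e ∈ exp_n(λ), i ≥ 0, and e₁, …, e_i ∈ exp_n(λ) satisfy e ⊊ e_j for each j (here ↑e = {f : e ⊆ f}). Then (exp_n(λ), τ_c) is a compact Hausdorff topological semilattice (the intersection operation is continuous), and τ_c is the unique such topology: any topology on exp_n(λ) that is compact, Hausdorff and makes ∩ continuous equals τ_c. -/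
open scoped Classical

universe u

/-- The semilattice `exp_n(λ) = {A ⊆ X : |A| ≤ n}` (with the operation of intersection),
where `λ = |X|`. -/
def EN (X : Type u) (n : ℕ) : Type u := {A : Finset X // A.card ≤ n}

/-- The semilattice operation on `exp_n(λ)`: intersection. -/
noncomputable def enInter {X : Type u} {n : ℕ} (A B : EN X n) : EN X n :=
  ⟨A.1 ∩ B.1, le_trans (Finset.card_le_card Finset.inter_subset_left) A.2⟩

/-- The base of the topology `τ_c` on `exp_n(λ)`: all sets of the form
`↑e \ (↑e₁ ∪ ⋯ ∪ ↑e_i)` where `e ⊊ e_j` for each `j`. -/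
def enBase (X : Type u) (n : ℕ) : Set (Set (EN X n)) :=
  {U | ∃ (e : EN X n) (F : Finset (EN X n)), (∀ f ∈ F, e.1 ⊂ f.1) ∧
    U = {g : EN X n | e.1 ⊆ g.1} \ ⋃ f ∈ F, {g : EN X n | f.1 ⊆ g.1}}

/-- The topology `τ_c` on `exp_n(λ)` generated by the base `enBase`. -/
noncomputable def tauC (X : Type u) (n : ℕ) : TopologicalSpace (EN X n) :=
  TopologicalSpace.generateFrom (enBase X n)

namespace ENAux

variable {X : Type u} {n : ℕ}

/-- The embedding of `EN X n` into `X → Bool`. -/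
noncomputable def iota (A : EN X n) : X → Bool := fun x => decide (x ∈ A.1)

lemma iota_inj : Function.Injective (iota (X := X) (n := n)) := by
  intro A B h
  apply Subtype.ext
  ext x
  have := congrFun h x
  simpa [iota, decide_eq_decide] using this

/-- Upper sets. -/
def up (e : EN X n) : Set (EN X n) := {g : EN X n | e.1 ⊆ g.1}

lemma isOpen_memSet (hn : 0 < n) (x : X) :
    @IsOpen (EN X n) (tauC X n) {A : EN X n | x ∈ A.1} := by
  letI := tauC X n
  have hb : {A : EN X n | x ∈ A.1} ∈ enBase X n := by
    refine ⟨⟨{x}, by simp; omega⟩, ∅, by simp, ?_⟩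
    ext g
    simp [Finset.singleton_subset_iff]
  exact TopologicalSpace.GenerateOpen.basic _ hb

lemma isOpen_notMemSet (x : X) :
    @IsOpen (EN X n) (tauC X n) {A : EN X n | x ∉ A.1} := by
  letI := tauC X n
  rw [isOpen_iff_forall_mem_open]
  intro g hg
  simp only [Set.mem_setOf_eq] at hg
  by_cases hc : g.1.card < n
  · have hcard : (insert x g.1).card ≤ n := by
      have := Finset.card_insert_le x g.1
      omega
    set gx : EN X n := ⟨insert x g.1, hcard⟩
    refine ⟨up g \ ⋃ f ∈ ({gx} : Finset (EN X n)), up f, ?_, ?_, ?_⟩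
    · intro h hh
      simp only [Finset.mem_singleton, Set.mem_diff, Set.mem_iUnion, not_exists] at hh
      obtain ⟨hgh, hnot⟩ := hh
      intro hxh
      exact hnot gx rfl (by
        simp only [up, Set.mem_setOf_eq, gx]
        exact Finset.insert_subset hxh hgh)
    · exact TopologicalSpace.GenerateOpen.basic _
        ⟨g, {gx}, by
          intro f hf
          simp only [Finset.mem_singleton] at hf
          subst hf
          exact Finset.ssubset_insert hg, rfl⟩
    · simp only [Finset.mem_singleton, Set.mem_diff, Set.mem_iUnion, not_exists]
      refine ⟨by simp [up], ?_⟩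
      rintro f rfl
      simp only [up, Set.mem_setOf_eq, gx]
      intro hsub
      exact hg (hsub (Finset.mem_insert_self x g.1))
  · have hcard : g.1.card = n := le_antisymm g.2 (not_lt.mp hc)
    refine ⟨up g \ ⋃ f ∈ (∅ : Finset (EN X n)), up f, ?_, ?_, ?_⟩
    · intro h hh
      simp only [Finset.notMem_empty, Set.mem_diff, Set.iUnion_of_empty,
        Set.iUnion_empty, Set.mem_empty_iff_false, not_false_iff, and_true] at hh
      have : g.1 = h.1 := Finset.eq_of_subset_of_card_le hh (le_trans h.2 hcard.ge)
      simpa [← this] using hg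
    · exact TopologicalSpace.GenerateOpen.basic _ ⟨g, ∅, by simp, rfl⟩
    · simp [up]

lemma tauC_eq_induced (hn : 0 < n) :
    tauC X n = TopologicalSpace.induced (iota (X := X) (n := n)) Pi.topologicalSpace := by
  apply le_antisymm
  · -- every induced-open set is τ_c-open, i.e. ι is continuous from τ_c
    letI := tauC X n
    rw [← continuous_iff_le_induced]
    apply continuous_pi
    intro x
    rw [continuous_discrete_rng]
    intro b
    cases b
    · have : (fun A : EN X n => iota A x) ⁻¹' {false} = {A : EN X n | x ∉ A.1} := by
        ext A; simp [iota]
      rw [this]; exact isOpen_notMemSet x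
    · have : (fun A : EN X n => iota A x) ⁻¹' {true} = {A : EN X n | x ∈ A.1} := by
        ext A; simp [iota]
      rw [this]; exact isOpen_memSet hn x
  · -- every basic τ_c-set is induced-open
    letI := TopologicalSpace.induced (iota (X := X) (n := n)) Pi.topologicalSpace
    apply le_generateFrom
    rintro U ⟨e, F, hF, rfl⟩
    have hmem : ∀ x : X, IsOpen {A : EN X n | x ∈ A.1} := by
      intro x
      have : {A : EN X n | x ∈ A.1}
          = iota (X := X) (n := n) ⁻¹' ((fun f : X → Bool => f x) ⁻¹' {true}) := by
        ext A; simp [iota]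
      rw [this]
      exact ((continuous_apply x).comp continuous_induced_dom).isOpen_preimage _
        (isOpen_discrete _)
    have hup : ∀ f : EN X n, IsOpen ({g : EN X n | f.1 ⊆ g.1}ᶜ) := by
      intro f
      have : ({g : EN X n | f.1 ⊆ g.1}ᶜ) = ⋃ x ∈ f.1, {A : EN X n | x ∈ A.1}ᶜ := by
        ext g
        simp only [Set.mem_compl_iff, Set.mem_setOf_eq, Finset.subset_iff, not_forall,
          Set.mem_iUnion, exists_prop]
      rw [this]
      apply isOpen_biUnion
      intro x hx
      have : ({A : EN X n | x ∈ A.1}ᶜ : Set (EN X n))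
          = iota (X := X) (n := n) ⁻¹' ((fun f : X → Bool => f x) ⁻¹' {false}) := by
        ext A; simp [iota]
      rw [this]
      exact ((continuous_apply x).comp continuous_induced_dom).isOpen_preimage _
        (isOpen_discrete _)
    apply IsOpen.sdiff
    · have : {g : EN X n | e.1 ⊆ g.1} = ⋂ x ∈ e.1, {A : EN X n | x ∈ A.1} := by
        ext g; simp [Finset.subset_iff]
      rw [this]
      exact isOpen_biInter_finset fun x _ => hmem x
    · exact Set.Finite.isClosed_biUnion F.finite_toSet
        fun f _ => ⟨hup f⟩

lemma isClosed_range_iota :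
    IsClosed (Set.range (iota (X := X) (n := n))) := by
  rw [← isOpen_compl_iff]
  have hEq : (Set.range (iota (X := X) (n := n)))ᶜ
      = ⋃ (s : Finset X) (_ : n < s.card), ⋂ x ∈ s, {f : X → Bool | f x = true} := by
    ext f
    simp only [Set.mem_compl_iff, Set.mem_range, Set.mem_iUnion, Set.mem_iInter,
      Set.mem_setOf_eq]
    constructor
    · intro hf
      by_contra hno
      push_neg at hno
      have hfin : {x | f x = true}.Finite := by
        by_contra hinf
        have hinf' : Set.Infinite {x | f x = true} := hinf
        obtain ⟨t, hts, htc⟩ := hinf'.exists_subset_card_eq (n + 1)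
        obtain ⟨x, hx, hfx⟩ := hno t (by omega)
        exact hfx (hts hx)
      have hcard : hfin.toFinset.card ≤ n := by
        by_contra h'
        obtain ⟨x, hx, hfx⟩ := hno hfin.toFinset (not_le.mp h')
        exact hfx ((Set.Finite.mem_toFinset hfin).mp hx)
      refine hf ⟨⟨hfin.toFinset, hcard⟩, ?_⟩
      funext x
      by_cases h : f x = true
      · simp [iota, Set.Finite.mem_toFinset, h]
      · simp [iota, Set.Finite.mem_toFinset, h]
    · rintro ⟨s, hs, hstrue⟩ ⟨A, rfl⟩
      have hsub : s ⊆ A.1 := by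
        intro x hx
        have := hstrue x hx
        simpa [iota] using this
      have := Finset.card_le_card hsub
      have := A.2
      omega
  rw [hEq]
  apply isOpen_iUnion
  intro s
  apply isOpen_iUnion
  intro _
  apply isOpen_biInter_finset
  intro x _
  have : {f : X → Bool | f x = true} = (fun f : X → Bool => f x) ⁻¹' {true} := rfl
  rw [this]
  exact (continuous_apply x).isOpen_preimage _ (isOpen_discrete _)

lemma iota_isEmbedding (hn : 0 < n) :
    @Topology.IsEmbedding (EN X n) (X → Bool) (tauC X n) _ (iota (X := X) (n := n)) := by
  letI := tauC X n
  exact ⟨⟨tauC_eq_induced hn⟩, iota_inj⟩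

lemma iota_enInter (A B : EN X n) :
    iota (enInter A B) = fun x => iota A x && iota B x := by
  funext x
  simp only [iota, enInter, Finset.mem_inter]
  by_cases hA : x ∈ A.1 <;> by_cases hB : x ∈ B.1 <;> simp [hA, hB]

end ENAux

open ENAux in
/-- `τ_c` is a compact Hausdorff topology making the intersection operation
continuous, and it is the unique such topology on `exp_n(λ)`. -/
theorem tauC_unique_compact_semilattice_topology
    {X : Type u} [Nonempty X] (n : ℕ) (hn : 0 < n) :
    @T2Space (EN X n) (tauC X n) ∧
    @CompactSpace (EN X n) (tauC X n) ∧
    @Continuous (EN X n × EN X n) (EN X n)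
      (@instTopologicalSpaceProd _ _ (tauC X n) (tauC X n)) (tauC X n)
      (fun p => enInter p.1 p.2) ∧
    ∀ τ : TopologicalSpace (EN X n),
      @T2Space (EN X n) τ →
      @CompactSpace (EN X n) τ →
      @Continuous (EN X n × EN X n) (EN X n)
        (@instTopologicalSpaceProd _ _ τ τ) τ (fun p => enInter p.1 p.2) →
      τ = tauC X n := by
  have ht2 : @T2Space (EN X n) (tauC X n) := by
    letI := tauC X n
    exact (iota_isEmbedding hn).t2Space
  have hcompact : @CompactSpace (EN X n) (tauC X n) := by
    letI := tauC X n
    refine ⟨?_⟩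
    rw [(iota_isEmbedding hn).isCompact_iff, Set.image_univ]
    exact isClosed_range_iota.isCompact
  have hcont : @Continuous (EN X n × EN X n) (EN X n)
      (@instTopologicalSpaceProd _ _ (tauC X n) (tauC X n)) (tauC X n)
      (fun p => enInter p.1 p.2) := by
    letI := tauC X n
    rw [(iota_isEmbedding hn).toIsInducing.continuous_iff]
    apply continuous_pi
    intro x
    have hEq : (fun p : EN X n × EN X n => (iota (enInter p.1 p.2)) x)
        = (fun q : Bool × Bool => q.1 && q.2)
          ∘ (fun p : EN X n × EN X n => (iota p.1 x, iota p.2 x)) := by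
      funext p
      simp [iota_enInter]
    show Continuous fun p : EN X n × EN X n => (iota (enInter p.1 p.2)) x
    rw [hEq]
    have hiota : Continuous (iota (X := X) (n := n)) :=
      (iota_isEmbedding hn).toIsInducing.continuous
    exact continuous_of_discreteTopology.comp
      ((((continuous_apply x).comp hiota).comp continuous_fst).prodMk
        (((continuous_apply x).comp hiota).comp continuous_snd))
  refine ⟨ht2, hcompact, hcont, ?_⟩
  intro τ hτ2 hτc hτcont
  have hle : τ ≤ tauC X n := by
    letI := τ
    apply le_generateFrom
    rintro U ⟨e, F, hF, rfl⟩
    -- upsets are closed in τ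
    have hupClosed : ∀ f : EN X n, IsClosed {g : EN X n | f.1 ⊆ g.1} := by
      intro f
      have hEq : {g : EN X n | f.1 ⊆ g.1} = (fun g => enInter f g) ⁻¹' {f} := by
        ext g
        simp only [Set.mem_setOf_eq, Set.mem_preimage, Set.mem_singleton_iff]
        constructor
        · intro h
          exact Subtype.ext (by simpa [enInter] using Finset.inter_eq_left.mpr h)
        · intro h
          have : f.1 ∩ g.1 = f.1 := congrArg Subtype.val h
          exact Finset.inter_eq_left.mp this
      rw [hEq]
      exact IsClosed.preimage
        (hτcont.comp (continuous_const.prodMk continuous_id)) isClosed_singleton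
    -- {g | x ∉ g} is closed in τ
    have hnotClosed : ∀ x : X, IsClosed {g : EN X n | x ∉ g.1} := by
      intro x
      have hxcard : ({x} : Finset X).card ≤ n := by simp; omega
      have hEq : {g : EN X n | x ∉ g.1}
          = (fun g => enInter ⟨{x}, hxcard⟩ g) ⁻¹'
            {⟨∅, by simp⟩} := by
        ext g
        simp only [Set.mem_setOf_eq, Set.mem_preimage, Set.mem_singleton_iff]
        constructor
        · intro h
          refine Subtype.ext ?_
          simp only [enInter]
          rw [Finset.singleton_inter_of_notMem h]
        · intro h hx
          have : ({x} : Finset X) ∩ g.1 = ∅ := congrArg Subtype.val h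
          have := Finset.singleton_inter_of_mem hx (s := g.1)
          rw [this] at *
          simp_all
      rw [hEq]
      exact IsClosed.preimage
        (hτcont.comp (continuous_const.prodMk continuous_id)) isClosed_singleton
    -- upsets are open in τ
    have hupOpen : ∀ f : EN X n, IsOpen {g : EN X n | f.1 ⊆ g.1} := by
      intro f
      rw [← isClosed_compl_iff]
      have hEq : ({g : EN X n | f.1 ⊆ g.1}ᶜ) = ⋃ x ∈ f.1, {g : EN X n | x ∉ g.1} := by
        ext g
        simp only [Set.mem_compl_iff, Set.mem_setOf_eq, Finset.subset_iff, not_forall,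
          Set.mem_iUnion, exists_prop]
      rw [hEq]
      exact Set.Finite.isClosed_biUnion f.1.finite_toSet fun x _ => hnotClosed x
    exact (hupOpen e).sdiff
      (Set.Finite.isClosed_biUnion F.finite_toSet fun f _ => hupClosed f)
  refine le_antisymm hle ?_
  -- tauC ≤ τ : every τ-open is tauC-open, via compactness
  intro s hs
  rw [← @isClosed_compl_iff _ (tauC X n)]
  have hcpt : @IsCompact (EN X n) τ sᶜ := by
    letI := τ
    exact (isClosed_compl_iff.mpr hs).isCompact
  have hcpt' : @IsCompact (EN X n) (tauC X n) sᶜ := by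
    have hid : @Continuous (EN X n) (EN X n) τ (tauC X n) id :=
      continuous_id_iff_le.mpr hle
    have := @IsCompact.image (EN X n) (EN X n) τ (tauC X n) _ id hcpt hid
    simpa using this
  letI := tauC X n
  exact hcpt'.isClosed
end

section
/- Let X be a set (type) of cardinality λ ≥ 1, n a positive integer, and let τ be a Hausdorff topology on exp_n(λ) = {A ⊆ X : |A| ≤ n} making the intersection operation ∩ continuous. Then (exp_n(λ), τ) is compact if and only if it is countably compact. -/
open scoped Classical

universe u

/-- Infinite Δ-system (sunflower) lemma for families of finsets of bounded size. -/
lemma infinite_sunflower {X : Type u} :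
    ∀ (k : ℕ) (𝒟 : Set (Finset X)), 𝒟.Infinite → (∀ A ∈ 𝒟, A.card ≤ k) →
      ∃ R : Finset X, ∃ 𝒟' : Set (Finset X), 𝒟' ⊆ 𝒟 ∧ 𝒟'.Infinite ∧
        ∀ A ∈ 𝒟', ∀ B ∈ 𝒟', A ≠ B → A ∩ B = R := by
  intro k
  induction k with
  | zero =>
    intro 𝒟 hinf hcard
    exfalso
    apply hinf
    apply Set.Finite.subset (Set.finite_singleton (∅ : Finset X))
    intro A hA
    simpa using Finset.card_eq_zero.mp (Nat.le_zero.mp (hcard A hA))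
  | succ k ih =>
    intro 𝒟 hinf hcard
    by_cases hx : ∃ x : X, {A ∈ 𝒟 | x ∈ A}.Infinite
    · obtain ⟨x, hxinf⟩ := hx
      set 𝒮 : Set (Finset X) := {A ∈ 𝒟 | x ∈ A} with h𝒮
      have hinj : Set.InjOn (fun A => Finset.erase A x) 𝒮 := by
        intro A hA B hB h
        have h2 : insert x (A.erase x) = insert x (B.erase x) := by
          simp only at h; rw [h]
        rwa [Finset.insert_erase hA.2, Finset.insert_erase hB.2] at h2
      have hEinf : ((fun A => Finset.erase A x) '' 𝒮).Infinite :=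
        Set.Infinite.image hinj hxinf
      have hEcard : ∀ B ∈ (fun A => Finset.erase A x) '' 𝒮, B.card ≤ k := by
        rintro B ⟨A, hA, rfl⟩
        simp only
        rw [Finset.card_erase_of_mem hA.2]
        have hc := hcard A hA.1
        omega
      obtain ⟨R₁, E', hE'sub, hE'inf, hker⟩ := ih _ hEinf hEcard
      refine ⟨insert x R₁, {A ∈ 𝒮 | A.erase x ∈ E'}, fun A hA => hA.1.1, ?_, ?_⟩
      · intro hfin
        apply hE'inf
        apply Set.Finite.subset (hfin.image (fun A => Finset.erase A x))
        intro B hB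
        obtain ⟨A, hA, rfl⟩ := hE'sub hB
        exact ⟨A, ⟨hA, hB⟩, rfl⟩
      · rintro A ⟨hA𝒮, hAE⟩ B ⟨hB𝒮, hBE⟩ hAB
        have hne : A.erase x ≠ B.erase x := fun h => hAB (hinj hA𝒮 hB𝒮 h)
        have hk := hker _ hAE _ hBE hne
        ext a
        by_cases ha : a = x
        · subst ha
          simp [hA𝒮.2, hB𝒮.2]
        · have : a ∈ A.erase x ∩ B.erase x ↔ a ∈ R₁ := by rw [hk]
          simp only [Finset.mem_inter, Finset.mem_erase, ne_eq, ha,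
            not_false_iff, true_and] at this
          simp [Finset.mem_inter, Finset.mem_insert, ha, this]
    · push_neg at hx
      -- Zorn to get a maximal pairwise-disjoint subfamily; it must be infinite.
      set S : Set (Set (Finset X)) :=
        {C | C ⊆ 𝒟 ∧ ∀ A ∈ C, ∀ B ∈ C, A ≠ B → A ∩ B = ∅} with hS
      have hub : ∀ c ⊆ S, IsChain (· ⊆ ·) c → ∃ ub ∈ S, ∀ s ∈ c, s ⊆ ub := by
        intro c hc hchain
        refine ⟨⋃₀ c, ⟨?_, ?_⟩, fun s hs => Set.subset_sUnion_of_mem hs⟩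
        · intro A hA
          obtain ⟨s, hs, hAs⟩ := hA
          exact (hc hs).1 hAs
        · rintro A ⟨s, hs, hAs⟩ B ⟨t, ht, hBt⟩ hAB
          rcases hchain.total hs ht with h | h
          · exact (hc ht).2 A (h hAs) B hBt hAB
          · exact (hc hs).2 A hAs B (h hBt) hAB
      obtain ⟨C, hCmax⟩ := zorn_subset S hub
      have hCS : C ∈ S := hCmax.1
      have hCinf : C.Infinite := by
        intro hCfin
        -- set of points covered by members of C
        have hUfin : (⋃ A ∈ C, (↑A : Set X)).Finite :=
          Set.Finite.biUnion hCfin (fun A _ => A.finite_toSet)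
        have hMfin : {A ∈ 𝒟 | ∃ a ∈ A, a ∈ ⋃ B ∈ C, (↑B : Set X)}.Finite := by
          apply Set.Finite.subset (Set.Finite.biUnion hUfin
            (fun a _ => hx a))
          rintro A ⟨hA𝒟, a, haA, ha⟩
          exact Set.mem_biUnion ha ⟨hA𝒟, haA⟩
        obtain ⟨A, hA𝒟, hAnot⟩ := Set.Infinite.exists_notMem_finite hinf
          (hCfin.union hMfin)
        simp only [Set.mem_union, not_or, Set.mem_setOf_eq, not_and, not_exists] at hAnot
        have hAC : A ∉ C := hAnot.1
        have hdisj : ∀ B ∈ C, A ∩ B = ∅ := by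
          intro B hB
          by_contra h
          obtain ⟨a, ha⟩ := Finset.nonempty_iff_ne_empty.mpr h
          simp only [Finset.mem_inter] at ha
          exact (hAnot.2 hA𝒟 a ha.1) (Set.mem_biUnion hB ha.2)
        have : insert A C ∈ S := by
          constructor
          · intro B hB
            rcases Set.mem_insert_iff.mp hB with rfl | hB
            · exact hA𝒟
            · exact hCS.1 hB
          · rintro B hB B' hB' hne
            rcases Set.mem_insert_iff.mp hB with rfl | hBC
            · rcases Set.mem_insert_iff.mp hB' with rfl | hB'C
              · exact absurd rfl hne
              · exact hdisj B' hB'C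
            · rcases Set.mem_insert_iff.mp hB' with rfl | hB'C
              · rw [Finset.inter_comm]; exact hdisj B hBC
              · exact hCS.2 B hBC B' hB'C hne
        have := hCmax.2 this (Set.subset_insert A C)
        exact hAC (this (Set.mem_insert A C))
      exact ⟨∅, C, hCS.1, hCinf, hCS.2⟩

/-- Countable compactness (cover form) gives ω-accumulation points. -/
lemma exists_accumulation {S : Type u} [TopologicalSpace S]
    (hcc : ∀ U : ℕ → Set S, (∀ i, IsOpen (U i)) → (⋃ i, U i) = Set.univ →
      ∃ t : Finset ℕ, (⋃ i ∈ t, U i) = Set.univ)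
    (D : Set S) (hD : D.Infinite) :
    ∃ p : S, ∀ V : Set S, IsOpen V → p ∈ V → (V ∩ D).Infinite := by
  obtain ⟨f⟩ : Nonempty (ℕ ↪ D) := ⟨hD.natEmbedding⟩
  set g : ℕ → S := fun n => (f n : S) with hg
  have hginj : Function.Injective g := fun a b h => f.injective (Subtype.ext h)
  have hgD : ∀ n, g n ∈ D := fun n => (f n).2
  set F : ℕ → Set S := fun i => closure (g '' Set.Ici i) with hF
  have hpF : ∃ p, ∀ i, p ∈ F i := by
    by_contra h
    push_neg at h
    obtain ⟨t, ht⟩ := hcc (fun i => (F i)ᶜ) (fun i => (isClosed_closure).isOpen_compl)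
      (by
        ext p; simp only [Set.mem_iUnion, Set.mem_compl_iff, Set.mem_univ, iff_true]
        obtain ⟨i, hi⟩ := h p
        exact ⟨i, hi⟩)
    set m : ℕ := t.sup id with hm
    have hgm : g m ∈ Set.univ := Set.mem_univ _
    rw [← ht] at hgm
    simp only [Set.mem_iUnion, Set.mem_compl_iff] at hgm
    obtain ⟨i, hit, hgmi⟩ := hgm
    apply hgmi
    apply subset_closure
    exact ⟨m, Finset.le_sup (f := id) hit, rfl⟩
  obtain ⟨p, hp⟩ := hpF
  refine ⟨p, fun V hV hpV => ?_⟩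
  have hJ : ∀ i : ℕ, ∃ n, i ≤ n ∧ g n ∈ V := by
    intro i
    have := hp i
    rw [mem_closure_iff] at this
    obtain ⟨y, hyV, n, hn, rfl⟩ := this V hV hpV
    exact ⟨n, hn, hyV⟩
  have hJinf : {n : ℕ | g n ∈ V}.Infinite := by
    intro hfin
    obtain ⟨b, hb⟩ := hfin.bddAbove
    obtain ⟨n, hn, hgn⟩ := hJ (b + 1)
    have := hb hgn
    omega
  have : (g '' {n : ℕ | g n ∈ V}).Infinite :=
    Set.Infinite.image (hginj.injOn) hJinf
  apply Set.Infinite.mono ?_ this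
  rintro y ⟨n, hn, rfl⟩
  exact ⟨hn, hgD n⟩

/-- Key lemma: in a countably compact Hausdorff topological semilattice `EN X n`,
if an open set `V` contains all elements of cardinality `< k`, then only finitely many
elements of cardinality `≤ k` lie outside `V`. -/
lemma key_finite {X : Type u} {n : ℕ} [TopologicalSpace (EN X n)] [T2Space (EN X n)]
    (hcont : Continuous fun p : EN X n × EN X n => enInter p.1 p.2)
    (hcc : ∀ U : ℕ → Set (EN X n), (∀ i, IsOpen (U i)) → (⋃ i, U i) = Set.univ →
      ∃ t : Finset ℕ, (⋃ i ∈ t, U i) = Set.univ)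
    (k : ℕ) (V : Set (EN X n)) (hV : IsOpen V)
    (hVk : ∀ A : EN X n, A.1.card < k → A ∈ V) :
    {A : EN X n | A.1.card ≤ k ∧ A ∉ V}.Finite := by
  by_contra hinf
  rw [← Set.not_infinite, not_not] at hinf
  set D : Set (EN X n) := {A : EN X n | A.1.card ≤ k ∧ A ∉ V} with hD
  have h𝒟inf : (Subtype.val '' D).Infinite :=
    Set.Infinite.image (Subtype.val_injective.injOn) hinf
  have h𝒟card : ∀ A ∈ Subtype.val '' D, A.card ≤ k := by
    rintro A ⟨B, hB, rfl⟩; exact hB.1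
  obtain ⟨R, 𝒟', h𝒟'sub, h𝒟'inf, hker⟩ := infinite_sunflower k _ h𝒟inf h𝒟card
  set D' : Set (EN X n) := {A ∈ D | A.1 ∈ 𝒟'} with hD'
  have hD'inf : D'.Infinite := by
    intro hfin
    apply h𝒟'inf
    apply Set.Finite.subset (hfin.image Subtype.val)
    intro B hB
    obtain ⟨A, hA, rfl⟩ := h𝒟'sub hB
    exact ⟨A, ⟨hA, hB⟩, rfl⟩
  -- two distinct elements of D'
  obtain ⟨a, ha, b, hb, hab⟩ := Set.Infinite.nontrivial hD'inf
  have habv : a.1 ≠ b.1 := fun h => hab (Subtype.ext h)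
  have hRab : a.1 ∩ b.1 = R := hker _ ha.2 _ hb.2 habv
  have hRcard : R.card < k := by
    have hsub_a : R ⊆ a.1 := by rw [← hRab]; exact Finset.inter_subset_left
    have hsub_b : R ⊆ b.1 := by rw [← hRab]; exact Finset.inter_subset_right
    have : R.card < a.1.card ∨ R.card < b.1.card := by
      by_contra h
      push_neg at h
      have h1 : R = a.1 := Finset.eq_of_subset_of_card_le hsub_a h.1
      have h2 : R = b.1 := Finset.eq_of_subset_of_card_le hsub_b h.2
      exact habv (h1 ▸ h2)
    rcases this with h | h
    · exact lt_of_lt_of_le h ha.1.1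
    · exact lt_of_lt_of_le h hb.1.1
  have hRn : R.card ≤ n := by
    have hsub_a : R ⊆ a.1 := by rw [← hRab]; exact Finset.inter_subset_left
    exact le_trans (Finset.card_le_card hsub_a) a.2
  set Rp : EN X n := ⟨R, hRn⟩ with hRp
  obtain ⟨p, hpacc⟩ := exists_accumulation hcc D' hD'inf
  -- every open nbhd of p contains Rp
  have hpR : ∀ W : Set (EN X n), IsOpen W → p ∈ W → Rp ∈ W := by
    intro W hW hpW
    have hpp : enInter p p = p := Subtype.ext (Finset.inter_self p.1)
    have hpre : IsOpen ((fun q : EN X n × EN X n => enInter q.1 q.2) ⁻¹' W) :=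
      hcont.isOpen_preimage W hW
    have hmem : (p, p) ∈ (fun q : EN X n × EN X n => enInter q.1 q.2) ⁻¹' W := by
      simp only [Set.mem_preimage]; rw [hpp]; exact hpW
    obtain ⟨W₁, W₂, hW₁, hW₂, hp₁, hp₂, hsub⟩ := isOpen_prod_iff.mp hpre p p hmem
    have hWo : IsOpen (W₁ ∩ W₂) := hW₁.inter hW₂
    have : ((W₁ ∩ W₂) ∩ D').Infinite := hpacc _ hWo ⟨hp₁, hp₂⟩
    obtain ⟨c, hc, d, hd, hcd⟩ := this.nontrivial
    have hcdv : c.1 ≠ d.1 := fun h => hcd (Subtype.ext h)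
    have hmem2 : (c, d) ∈ (fun q : EN X n × EN X n => enInter q.1 q.2) ⁻¹' W :=
      hsub ⟨hc.1.1, hd.1.2⟩
    simp only [Set.mem_preimage] at hmem2
    have hRcd : enInter c d = Rp :=
      Subtype.ext (hker _ hc.2.2 _ hd.2.2 hcdv)
    rwa [hRcd] at hmem2
  have hpeq : p = Rp := by
    have : p ∈ closure {Rp} := by
      rw [mem_closure_iff]
      intro o ho hpo
      exact ⟨Rp, hpR o ho hpo, rfl⟩
    rwa [(isClosed_singleton).closure_eq] at this
  -- contradiction: V is a nbhd of p = Rp but D' ⊆ Vᶜ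
  have hpV : p ∈ V := by rw [hpeq]; exact hVk Rp hRcard
  obtain ⟨A, hAV, hAD'⟩ := (hpacc V hV hpV).nonempty
  exact hAD'.1.2 hAV

/-- For any Hausdorff topology on `exp_n(λ)` making intersection continuous,
`exp_n(λ)` is compact iff it is countably compact. -/
theorem expn_compact_iff_countablyCompact
    {X : Type u} [Nonempty X] (n : ℕ) (hn : 0 < n)
    [TopologicalSpace (EN X n)] [T2Space (EN X n)]
    (hcont : Continuous fun p : EN X n × EN X n => enInter p.1 p.2) :
    CompactSpace (EN X n) ↔
      ∀ U : ℕ → Set (EN X n), (∀ i, IsOpen (U i)) → (⋃ i, U i) = Set.univ →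
        ∃ t : Finset ℕ, (⋃ i ∈ t, U i) = Set.univ := by
  constructor
  · intro hcomp U hUo hUcov
    obtain ⟨t, ht⟩ := isCompact_univ.elim_finite_subcover U hUo (by rw [hUcov])
    exact ⟨t, Set.univ_subset_iff.mp ht⟩
  · intro hcc
    refine ⟨?_⟩
    apply isCompact_of_finite_subcover
    intro ι U hUo hUcov
    have step : ∀ k : ℕ, ∃ t : Finset ι, ∀ A : EN X n, A.1.card < k → A ∈ ⋃ i ∈ t, U i := by
      intro k
      induction k with
      | zero => exact ⟨∅, fun A hA => absurd hA (by omega)⟩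
      | succ k ih =>
        obtain ⟨t, ht⟩ := ih
        have hVo : IsOpen (⋃ i ∈ t, U i) := isOpen_biUnion (fun i _ => hUo i)
        obtain ⟨L, hL⟩ : ∃ L : Finset (EN X n), ∀ A : EN X n, A.1.card ≤ k →
            A ∉ (⋃ i ∈ t, U i) → A ∈ L := by
          refine ⟨(key_finite hcont hcc k _ hVo ht).toFinset, fun A h1 h2 => ?_⟩
          rw [Set.Finite.mem_toFinset]
          exact ⟨h1, h2⟩
        have hch : ∀ A : EN X n, ∃ i, A ∈ U i := by
          intro A
          have := hUcov (Set.mem_univ A)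
          simpa using this
        choose f hf using hch
        refine ⟨t ∪ L.image f, ?_⟩
        intro A hA
        by_cases hAV : A ∈ ⋃ i ∈ t, U i
        · simp only [Set.mem_iUnion] at hAV ⊢
          obtain ⟨i, hit, hAi⟩ := hAV
          exact ⟨i, Finset.mem_union_left _ hit, hAi⟩
        · have hAL : A ∈ L := hL A (by omega) hAV
          simp only [Set.mem_iUnion]
          exact ⟨f A, Finset.mem_union_right _ (Finset.mem_image_of_mem f hAL), hf A⟩
    obtain ⟨t, ht⟩ := step (n + 1)
    exact ⟨t, fun A _ => ht A (by have := A.2; omega)⟩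
end

section
/- Let X be a set (type), n a positive integer, and let τ be a topology on the symmetric inverse semigroup of finite transformations of rank ≤ n, I_λ^n (λ = |X|), making it a topological semigroup such that the band E(I_λ^n) (the set of partial identity maps id_A with |A| ≤ n) is a compact subset. Then (I_λ^n, τ) is an absolutely H-closed topological semigroup: for every topological semigroup T and every continuous semigroup homomorphism h : I_λ^n → T, the image h(I_λ^n) is closed in T. -/
open scoped Classical

universe u v

/-- `f : X → Option X` is a partial bijection: injective where defined. -/
def IsPB {X : Type u} (f : X → Option X) : Prop :=
  ∀ ⦃a b c : X⦄, f a = some c → f b = some c → a = b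

/-- The domain of a partial map `X → Option X`. -/
def pdom {X : Type u} (f : X → Option X) : Set X := {x | f x ≠ none}

/-- The symmetric inverse semigroup `I_λ^n` of finite partial bijections of `X`
of rank ≤ n: partial bijections whose domain has at most `n` elements.
The empty transformation (the constant `none` map) is its zero. -/
def FinPB (X : Type u) (n : ℕ) : Type u :=
  {f : X → Option X // IsPB f ∧ (pdom f).Finite ∧ (pdom f).ncard ≤ n}

namespace FinPB

variable {X : Type u} {n : ℕ}

/-- composition of partial maps, `x(fg) = (xf)g` -/
noncomputable def comp (f g : FinPB X n) : FinPB X n := by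
  refine ⟨fun x => (f.1 x).bind g.1, ?_, ?_, ?_⟩
  · rintro a b c h1 h2
    obtain ⟨u, hu, hu'⟩ := Option.bind_eq_some_iff.mp h1
    obtain ⟨v, hv, hv'⟩ := Option.bind_eq_some_iff.mp h2
    have : u = v := g.2.1 hu' hv'
    subst this
    exact f.2.1 hu hv
  · refine f.2.2.1.subset ?_
    intro x hx
    simp only [pdom, Set.mem_setOf_eq] at hx ⊢
    intro h
    exact hx (by rw [h]; rfl)
  · refine le_trans (Set.ncard_le_ncard ?_ f.2.2.1) f.2.2.2
    intro x hx
    simp only [pdom, Set.mem_setOf_eq] at hx ⊢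
    intro h
    exact hx (by rw [h]; rfl)

noncomputable instance : Semigroup (FinPB X n) where
  mul := comp
  mul_assoc f g h := by
    show comp (comp f g) h = comp f (comp g h)
    apply Subtype.ext
    funext x
    show ((f.1 x).bind g.1).bind h.1 = (f.1 x).bind fun a => (g.1 a).bind h.1
    cases f.1 x <;> rfl

end FinPB

section Aux

namespace FinPB

variable {X : Type u} {n : ℕ}

lemma mul_apply (f g : FinPB X n) (x : X) : (f * g).1 x = (f.1 x).bind g.1 := rfl

/-- The range set of a partial map. -/
def rset (f : X → Option X) : Set X := {x | ∃ a, f a = some x}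

lemma rset_eq (f : X → Option X) : rset f = some ⁻¹' (f '' pdom f) := by
  ext x
  simp only [rset, Set.mem_setOf_eq, Set.mem_preimage, Set.mem_image]
  constructor
  · rintro ⟨a, ha⟩
    exact ⟨a, by simp [pdom, ha], ha⟩
  · rintro ⟨a, _, ha⟩
    exact ⟨a, ha⟩

lemma rset_finite (f : FinPB X n) : (rset f.1).Finite := by
  rw [rset_eq]
  exact Set.Finite.preimage (fun a _ b _ hab => Option.some_injective X hab)
    (f.2.2.1.image f.1)

lemma rset_ncard (f : FinPB X n) : (rset f.1).ncard ≤ n := by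
  classical
  set w : X → X := fun x => if hx : ∃ a, f.1 a = some x then Classical.choose hx else x with hw
  have hkey : ∀ x ∈ rset f.1, f.1 (w x) = some x := by
    rintro x ⟨a, ha⟩
    rw [hw]
    simp only [dif_pos (⟨a, ha⟩ : ∃ a, f.1 a = some x)]
    exact Classical.choose_spec (⟨a, ha⟩ : ∃ a, f.1 a = some x)
  have hmaps : ∀ x ∈ rset f.1, w x ∈ pdom f.1 := by
    intro x hx
    have := hkey x hx
    simp [pdom, this]
  have hinj : Set.InjOn w (rset f.1) := by
    intro x hx y hy hxy
    have h1 := hkey x hx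
    have h2 := hkey y hy
    rw [hxy, h2] at h1
    exact Option.some_injective X h1.symm
  exact le_trans (Set.ncard_le_ncard_of_injOn w hmaps hinj f.2.2.1) f.2.2.2

/-- The range partial identity of `f`. -/
noncomputable def rmap (f : FinPB X n) : FinPB X n := by
  classical
  refine ⟨fun x => if x ∈ rset f.1 then some x else none, ?_, ?_, ?_⟩
  · intro a b c ha hb
    have ha' : (if a ∈ rset f.1 then some a else none) = some c := ha
    have hb' : (if b ∈ rset f.1 then some b else none) = some c := hb
    by_cases h1 : a ∈ rset f.1
    · by_cases h2 : b ∈ rset f.1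
      · rw [if_pos h1] at ha'
        rw [if_pos h2] at hb'
        rw [Option.some_inj] at ha' hb'
        rw [ha', hb']
      · rw [if_neg h2] at hb'
        exact nomatch hb'
    · rw [if_neg h1] at ha'
      exact nomatch ha'
  · refine (rset_finite f).subset ?_
    intro x hx
    by_contra h
    exact hx (by simp [pdom, if_neg h])
  · refine le_trans (Set.ncard_le_ncard ?_ (rset_finite f)) (rset_ncard f)
    intro x hx
    by_contra h
    exact hx (by simp [pdom, if_neg h])

lemma mul_rmap (f : FinPB X n) : f * rmap f = f := by
  apply Subtype.ext
  funext x
  show (f.1 x).bind (rmap f).1 = f.1 x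
  cases h : f.1 x with
  | none => rfl
  | some v =>
    have hv : v ∈ rset f.1 := ⟨x, h⟩
    show (rmap f).1 v = some v
    show (if v ∈ rset f.1 then some v else none) = some v
    rw [if_pos hv]

lemma rmap_band (f : FinPB X n) : rmap f * rmap f = rmap f := by
  apply Subtype.ext
  funext x
  show ((rmap f).1 x).bind (rmap f).1 = (rmap f).1 x
  have hx' : (rmap f).1 x = if x ∈ rset f.1 then some x else none := rfl
  by_cases hx : x ∈ rset f.1
  · rw [hx', if_pos hx]
    show (rmap f).1 x = some x
    rw [hx', if_pos hx]
  · rw [hx', if_neg hx]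
    rfl

/-- The domain partial identity of `f`. -/
noncomputable def dmap (f : FinPB X n) : FinPB X n := by
  refine ⟨fun x => (f.1 x).map (fun _ => x), ?_, ?_, ?_⟩
  · intro a b c ha hb
    obtain ⟨u, hu, hu'⟩ := Option.map_eq_some_iff.mp ha
    obtain ⟨v, hv, hv'⟩ := Option.map_eq_some_iff.mp hb
    exact hu'.trans hv'.symm
  · refine f.2.2.1.subset ?_
    intro x hx h
    exact hx (by simp [pdom, h])
  · refine le_trans (Set.ncard_le_ncard ?_ f.2.2.1) f.2.2.2
    intro x hx h
    exact hx (by simp [pdom, h])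

lemma dmap_mul (f : FinPB X n) : dmap f * f = f := by
  apply Subtype.ext
  funext x
  show ((f.1 x).map fun _ => x).bind f.1 = f.1 x
  cases h : f.1 x <;> simp [h]

lemma dmap_band (f : FinPB X n) : dmap f * dmap f = dmap f := by
  apply Subtype.ext
  funext x
  show ((f.1 x).map fun _ => x).bind (fun y => (f.1 y).map fun _ => y)
      = (f.1 x).map fun _ => x
  cases h : f.1 x <;> simp [h]

/-- The graph of a partial map, as a set of pairs. -/
def graph (g : X → Option X) : Set (X × X) := {p | g p.1 = some p.2}

lemma graph_injective : Function.Injective (graph (X := X)) := by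
  intro g₁ g₂ hg
  funext x
  cases h1 : g₁ x with
  | none =>
    cases h2 : g₂ x with
    | none => rfl
    | some v =>
      have hmem : (x, v) ∈ graph g₂ := h2
      rw [← hg] at hmem
      have : g₁ x = some v := hmem
      rw [h1] at this
      exact nomatch this
  | some v =>
    have hmem : (x, v) ∈ graph g₁ := h1
    rw [hg] at hmem
    have hmem' : g₂ x = some v := hmem
    exact hmem'.symm

/-- The key finiteness: for fixed `d r`, the set of all `d * f * r` is finite. -/
lemma range_sandwich_finite (d r : FinPB X n) :
    (Set.range fun f : FinPB X n => d * f * r).Finite := by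
  have hK : {g : X → Option X | (∀ x, g x ≠ none → x ∈ pdom d.1) ∧
      (∀ x v, g x = some v → v ∈ rset r.1)}.Finite := by
    refine Set.Finite.of_finite_image ?_ (fun a _ b _ hab => graph_injective hab)
    refine Set.Finite.subset (Set.Finite.finite_subsets ((d.2.2.1).prod (rset_finite r))) ?_
    rintro t ⟨g, ⟨hg1, hg2⟩, rfl⟩
    intro p hp
    have hp' : g p.1 = some p.2 := hp
    exact ⟨hg1 p.1 (by simp [hp']), hg2 p.1 p.2 hp'⟩
  have hsub : (Set.range fun f : FinPB X n => d * f * r) ⊆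
      Subtype.val ⁻¹' {g : X → Option X | (∀ x, g x ≠ none → x ∈ pdom d.1) ∧
        (∀ x v, g x = some v → v ∈ rset r.1)} := by
    rintro _ ⟨f, rfl⟩
    constructor
    · intro x hx
      have hx' : ((d.1 x).bind f.1).bind r.1 ≠ none := hx
      simp only [pdom, Set.mem_setOf_eq]
      intro hd
      rw [hd] at hx'
      exact hx' rfl
    · intro x v hxv
      have hxv' : ((d.1 x).bind f.1).bind r.1 = some v := hxv
      obtain ⟨u, hu, hu'⟩ := Option.bind_eq_some_iff.mp hxv'
      exact ⟨u, hu'⟩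
  exact Set.Finite.subset
    (hK.preimage (fun a _ b _ hab => Subtype.val_injective hab)) hsub

end FinPB

end Aux

/-- If the band (the set of idempotents, i.e. the partial identities) of a
topological semigroup `I_λ^n` is compact, then `I_λ^n` is absolutely `H`-closed:
the image of any continuous homomorphism into a topological semigroup is closed. -/
theorem finPB_absolutelyHClosed_of_compact_band
    {X : Type u} (n : ℕ) (hn : 0 < n)
    [TopologicalSpace (FinPB X n)] [T2Space (FinPB X n)] [ContinuousMul (FinPB X n)]
    (hband : IsCompact {f : FinPB X n | f * f = f}) :
    ∀ (T : Type v) [Semigroup T] [TopologicalSpace T] [T2Space T] [ContinuousMul T]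
      (h : FinPB X n → T),
      Continuous h →
      (∀ a b : FinPB X n, h (a * b) = h a * h b) →
      IsClosed (Set.range h) := by
  intro T _ _ _ _ h hc hhom
  refine isClosed_of_closure_subset ?_
  intro y hy
  have hF : (Filter.comap h (nhds y)).NeBot := by
    refine Filter.comap_neBot ?_
    intro t ht
    obtain ⟨w, hw1, f, hf⟩ := mem_closure_iff_nhds.mp hy t ht
    exact ⟨f, hf ▸ hw1⟩
  set U : Ultrafilter (FinPB X n) := Ultrafilter.of (Filter.comap h (nhds y)) with hUdef
  have hty : Filter.Tendsto h ↑U (nhds y) :=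
    le_trans (Filter.map_mono (Ultrafilter.of_le _)) Filter.map_comap_le
  have hE : IsCompact (h '' {f : FinPB X n | f * f = f}) := hband.image hc
  -- limit of domain idempotents
  obtain ⟨t, ⟨d, hd_band, hdt⟩, htend⟩ :=
    hE.ultrafilter_le_nhds (U.map (fun f => h (FinPB.dmap f)))
      (Filter.le_principal_iff.mpr (Filter.mem_map.mpr
        (Filter.univ_mem' (fun f => Set.mem_image_of_mem h (FinPB.dmap_band f)))))
  have htend' : Filter.Tendsto (fun f => h (FinPB.dmap f)) ↑U (nhds t) := htend
  have hleft : t * y = y := by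
    have h1 : Filter.Tendsto (fun f => h (FinPB.dmap f) * h f) ↑U (nhds (t * y)) :=
      htend'.mul hty
    have h2 : (fun f : FinPB X n => h (FinPB.dmap f) * h f) = h := by
      funext f
      rw [← hhom, FinPB.dmap_mul]
    rw [h2] at h1
    exact tendsto_nhds_unique h1 hty
  -- limit of range idempotents
  obtain ⟨s, ⟨r, hr_band, hrs⟩, rtend⟩ :=
    hE.ultrafilter_le_nhds (U.map (fun f => h (FinPB.rmap f)))
      (Filter.le_principal_iff.mpr (Filter.mem_map.mpr
        (Filter.univ_mem' (fun f => Set.mem_image_of_mem h (FinPB.rmap_band f)))))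
  have rtend' : Filter.Tendsto (fun f => h (FinPB.rmap f)) ↑U (nhds s) := rtend
  have hright : y * s = y := by
    have h1 : Filter.Tendsto (fun f => h f * h (FinPB.rmap f)) ↑U (nhds (y * s)) :=
      hty.mul rtend'
    have h2 : (fun f : FinPB X n => h f * h (FinPB.rmap f)) = h := by
      funext f
      rw [← hhom, FinPB.mul_rmap]
    rw [h2] at h1
    exact tendsto_nhds_unique h1 hty
  -- the sandwich set is finite, hence its image is closed
  have hM : (h '' (Set.range fun f : FinPB X n => d * f * r)).Finite :=
    (FinPB.range_sandwich_finite d r).image h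
  have hMclosed : IsClosed (h '' (Set.range fun f : FinPB X n => d * f * r)) :=
    hM.isClosed
  have hval : (h d * y) * h r = y := by rw [hdt, hleft, hrs, hright]
  have htend3 : Filter.Tendsto (fun f => h (d * f * r)) ↑U (nhds y) := by
    have h1 : Filter.Tendsto (fun f : FinPB X n => (h d * h f) * h r) ↑U
        (nhds ((h d * y) * h r)) := (tendsto_const_nhds.mul hty).mul tendsto_const_nhds
    rw [hval] at h1
    exact h1.congr (fun f => by rw [hhom, hhom])
  have hy' : y ∈ h '' (Set.range fun f : FinPB X n => d * f * r) :=
    hMclosed.mem_of_tendsto htend3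
      (Filter.Eventually.of_forall fun f => ⟨d * f * r, ⟨f, rfl⟩, rfl⟩)
  obtain ⟨g, _, hg⟩ := hy'
  exact ⟨g, hg⟩
end
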